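/- The determinant of the (p-1)×(p-1) integer circulant matrix T_p with first row the integer representatives (a₀,...,a_{p-2}) of powers of a primitive root g mod p is zero for every odd prime p ≥ 5. -/

import Mathlib

/-! Write `p - 1 = 2m`. Since `g` has order `2m`, `g ^ m = -1`, so the representatives of `g ^ k`
and `g ^ (k + m)` are `x` and `p - x` for some `x`. Hence rows `i` and `i + m` of `T_p` add up to the
constant row `(p, …, p)`. In particular rows `0, m` and rows `1, 1 + m` have the same sum, and for
`p ≥ 5` these are four distinct rows, so the rows are linearly dependent. -/

theorem pow_eq_neg_one_of_orderOf_eq_two_mul {R : Type*} [CommRing R] [NoZeroDivisors R]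
    {g : R} {m : ℕ} (hm : m ≠ 0) (hg : orderOf g = 2 * m) : g ^ m = -1 := by
  have h := (hg ▸ IsPrimitiveRoot.orderOf g).pow_of_dvd hm (dvd_mul_left m 2)
  rw [Nat.mul_div_cancel _ (Nat.pos_of_ne_zero hm)] at h
  exact h.eq_neg_one_of_two_right

theorem ZMod.val_add_val_neg {n : ℕ} [NeZero n] {x : ZMod n} (hx : x ≠ 0) :
    x.val + (-x).val = n := by
  rw [ZMod.neg_val, if_neg hx]
  have := x.val_lt
  omega

theorem ZMod.val_pow_add_val_pow_add_of_orderOf_eq_two_mul {p m : ℕ} [Fact p.Prime] {g : ZMod p} (hm : m ≠ 0)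
    (hg : orderOf g = 2 * m) (k : ℕ) : (g ^ k).val + (g ^ (k + m)).val = p := by
  have hg0 : g ≠ 0 := by
    rintro rfl
    rw [orderOf_zero] at hg
    omega
  rw [pow_add, pow_eq_neg_one_of_orderOf_eq_two_mul hm hg, mul_neg_one]
  exact ZMod.val_add_val_neg (pow_ne_zero k hg0)

theorem Matrix.det_eq_zero_of_add_row_eq_add_row {R n : Type*} [CommRing R] [IsDomain R]
    [Fintype n] [DecidableEq n] (M : Matrix n n R) {a b c d : n} (hab : a ≠ b) (hac : a ≠ c)
    (had : a ≠ d) (h : M a + M b = M c + M d) : M.det = 0 := by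
  refine Matrix.exists_vecMul_eq_zero_iff.mp
    ⟨Pi.single a 1 + Pi.single b 1 - Pi.single c 1 - Pi.single d 1, fun h0 => ?_, ?_⟩
  · simpa [Pi.single_apply, hab.symm, hac.symm, had.symm] using congrFun h0 a
  · rw [sub_sub, Matrix.sub_vecMul]
    simp only [Matrix.add_vecMul, Matrix.single_one_vecMul]
    exact sub_eq_zero.mpr h

theorem stmt_18 (p : ℕ) [Fact p.Prime] (hp : 5 ≤ p)
    (g : ZMod p) (hg : orderOf g = p - 1)
    (T : Matrix (Fin (p - 1)) (Fin (p - 1)) ℤ)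
    (hT : ∀ i j, T i j = ((g ^ ((j.val + (p - 1) - i.val) % (p - 1))).val : ℤ)) :
    T.det = 0 := by
  obtain ⟨m, hm⟩ : ∃ m, p - 1 = 2 * m := by
    obtain ⟨k, hk⟩ := (Fact.out : p.Prime).odd_of_ne_two (by omega)
    exact ⟨k, by omega⟩
  have hT' : ∀ i j : Fin (p - 1), T i j = (g ^ (j.val + (p - 1) - i.val)).val := by
    intro i j
    have hmod := pow_mod_orderOf g (j.val + (p - 1) - i.val)
    rw [hg] at hmod
    rw [hT, hmod]
  have hrows : ∀ i i' : Fin (p - 1), i'.val = i.val + m → T i + T i' = fun _ => (p : ℤ) := by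
    intro i i' hi'
    funext j
    have hexp : j.val + (p - 1) - i.val = (j.val + (p - 1) - i'.val) + m := by omega
    rw [Pi.add_apply, hT', hT', hexp, add_comm]
    exact_mod_cast ZMod.val_pow_add_val_pow_add_of_orderOf_eq_two_mul (by omega) (hm ▸ hg) _
  refine T.det_eq_zero_of_add_row_eq_add_row (a := ⟨0, by omega⟩) (b := ⟨m, by omega⟩)
    (c := ⟨1, by omega⟩) (d := ⟨1 + m, by omega⟩)
    (by simp only [ne_eq, Fin.mk.injEq]; omega) (by simp only [ne_eq, Fin.mk.injEq]; omega)
    (by simp only [ne_eq, Fin.mk.injEq]; omega) ?_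
  rw [hrows _ _ (zero_add m).symm, hrows _ _ rfl]
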